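/- Let L > 0 and σ ∈ {1, −1}, and let A be the real 4×4 matrix with rows: (9√3σ/(64L⁷), 15√3σ/(64L⁷), −85/(192L⁷), −163/(192L⁷)); (15√3σ/(64L⁷), 9√3σ/(64L⁷), −163/(192L⁷), −85/(192L⁷)); (31/(192L⁷), 73/(192L⁷), −9√3σ/(64L⁷), −15√3σ/(64L⁷)); (73/(192L⁷), 31/(192L⁷), −15√3σ/(64L⁷), −9√3σ/(64L⁷)). Then the characteristic polynomial of A is λ⁴ + (49/(144 L¹⁴))·λ² + 5/(288 L²⁸), and the eigenvalues of A over ℂ are exactly the four distinct purely imaginary numbers i√10/(6L⁷), −i√10/(6L⁷), i/(4L⁷), −i/(4L⁷). In particular A is diagonalizable over ℂ and nonsingular. -/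

import Mathlib

/-!
The matrix `A34 L σ` commutes with the simultaneous swap of coordinates `1 ↔ 2` and `3 ↔ 4`, so
it splits into its actions on the symmetric and the antisymmetric vectors. On each of them it is
a trace-free `2 × 2` matrix `[[s, t], [u, -s]]`, with `s² + t u` equal to `-10 / (36 L¹⁴)` and
`-1 / (16 L¹⁴)` respectively (here `σ² = 1` enters). Hence the eigenvalues are
`±i√10 / (6L⁷)` and `±i / (4L⁷)`, with explicit eigenvectors; the characteristic polynomial,
the spectrum and the determinant are read off from the resulting diagonalization.
-/

open Real Matrix Polynomial Complex

/-- The linearization matrix `A_{3,4}` at the circular polar relative equilibria `E₃, E₄`. -/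
noncomputable def A34 (L σ : ℝ) : Matrix (Fin 4) (Fin 4) ℝ :=
  !![9 * Real.sqrt 3 * σ / (64 * L ^ 7), 15 * Real.sqrt 3 * σ / (64 * L ^ 7),
      -85 / (192 * L ^ 7), -163 / (192 * L ^ 7);
     15 * Real.sqrt 3 * σ / (64 * L ^ 7), 9 * Real.sqrt 3 * σ / (64 * L ^ 7),
      -163 / (192 * L ^ 7), -85 / (192 * L ^ 7);
     31 / (192 * L ^ 7), 73 / (192 * L ^ 7), -(9 * Real.sqrt 3 * σ) / (64 * L ^ 7),
      -(15 * Real.sqrt 3 * σ) / (64 * L ^ 7);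
     73 / (192 * L ^ 7), 31 / (192 * L ^ 7), -(15 * Real.sqrt 3 * σ) / (64 * L ^ 7),
      -(9 * Real.sqrt 3 * σ) / (64 * L ^ 7)]

theorem Matrix.det_fin_four {R : Type*} [CommRing R] (M : Matrix (Fin 4) (Fin 4) R) :
    M.det = M 0 0 * M 1 1 * M 2 2 * M 3 3 - M 0 0 * M 1 1 * M 2 3 * M 3 2
      - M 0 0 * M 1 2 * M 2 1 * M 3 3 + M 0 0 * M 1 2 * M 2 3 * M 3 1
      + M 0 0 * M 1 3 * M 2 1 * M 3 2 - M 0 0 * M 1 3 * M 2 2 * M 3 1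
      - M 0 1 * M 1 0 * M 2 2 * M 3 3 + M 0 1 * M 1 0 * M 2 3 * M 3 2
      + M 0 1 * M 1 2 * M 2 0 * M 3 3 - M 0 1 * M 1 2 * M 2 3 * M 3 0
      - M 0 1 * M 1 3 * M 2 0 * M 3 2 + M 0 1 * M 1 3 * M 2 2 * M 3 0
      + M 0 2 * M 1 0 * M 2 1 * M 3 3 - M 0 2 * M 1 0 * M 2 3 * M 3 1
      - M 0 2 * M 1 1 * M 2 0 * M 3 3 + M 0 2 * M 1 1 * M 2 3 * M 3 0
      + M 0 2 * M 1 3 * M 2 0 * M 3 1 - M 0 2 * M 1 3 * M 2 1 * M 3 0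
      - M 0 3 * M 1 0 * M 2 1 * M 3 2 + M 0 3 * M 1 0 * M 2 2 * M 3 1
      + M 0 3 * M 1 1 * M 2 0 * M 3 2 - M 0 3 * M 1 1 * M 2 2 * M 3 0
      - M 0 3 * M 1 2 * M 2 0 * M 3 1 + M 0 3 * M 1 2 * M 2 1 * M 3 0 := by
  simp only [det_succ_row_zero, Nat.succ_eq_add_one, Nat.reduceAdd, Fin.isValue, submatrix_apply,
    Fin.succ_zero_eq_one, Fin.succAbove, submatrix_submatrix, Function.comp_apply,
    Fin.succ_one_eq_two, det_unique, Fin.default_eq_zero, Fin.reduceSucc, Fin.castSucc_zero,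
    Fin.sum_univ_succ, Fin.coe_ofNat_eq_mod, Nat.zero_mod, pow_zero, one_mul, lt_self_iff_false,
    reduceIte, Fin.castSucc_one, Finset.univ_unique, Fin.val_succ, Fin.val_eq_zero, zero_add,
    pow_one, Fin.castSucc_succ, neg_mul, Fin.succ_pos, Finset.sum_neg_distrib,
    Finset.sum_singleton, not_lt_zero, Fin.reduceCastSucc, even_two, Even.neg_pow, one_pow,
    Fin.reduceLT, Fin.lt_one_iff, Fin.reduceEq]
  ring

theorem Matrix.charpoly_diagonal_neg_pair {R : Type*} [CommRing R] (μ ν : R) :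
    (diagonal ![μ, -μ, ν, -ν]).charpoly
      = X ^ 4 - C (μ ^ 2 + ν ^ 2) * X ^ 2 + C (μ ^ 2 * ν ^ 2) := by
  simp only [charpoly_diagonal, Fin.prod_univ_four, Matrix.cons_val, C_neg, C_add, C_mul, C_pow]
  ring

theorem List.pairwise_ne_neg_pair {R : Type*} [Ring R] [NoZeroDivisors R] [CharZero R]
    {μ ν : R} (hμ : μ ≠ 0) (hν : ν ≠ 0) (hμν : μ ^ 2 ≠ ν ^ 2) :
    [μ, -μ, ν, -ν].Pairwise (· ≠ ·) := by
  have hne : μ ≠ ν ∧ μ ≠ -ν := ⟨fun h => hμν (by rw [h]), fun h => hμν (by rw [h, neg_sq])⟩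
  simp only [List.pairwise_cons, List.mem_cons, forall_eq_or_imp, List.not_mem_nil,
    IsEmpty.forall_iff, implies_true, List.Pairwise.nil, and_true]
  refine ⟨⟨?_, hne.1, hne.2⟩, ⟨?_, ?_⟩, ?_⟩
  · exact fun h => hμ (CharZero.eq_neg_self_iff.mp h)
  · exact fun h => hne.2 (by rw [← h, neg_neg])
  · exact fun h => hne.1 (neg_injective h)
  · exact fun h => hν (CharZero.eq_neg_self_iff.mp h)

theorem sq_I_mul_sqrt_ten_div_six_mul (x : ℂ) :
    (I * (Real.sqrt 10 : ℝ) / (6 * x)) ^ 2 = -(5 / (18 * x ^ 2)) := by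
  have h10 : ((Real.sqrt 10 : ℝ) : ℂ) ^ 2 = 10 := by norm_cast; simp
  rw [div_pow, mul_pow, mul_pow, I_sq, h10]
  ring

theorem sq_I_div_four_mul (x : ℂ) : (I / (4 * x)) ^ 2 = -(1 / (16 * x ^ 2)) := by
  rw [div_pow, mul_pow, I_sq]
  ring

noncomputable def A34eigenvalues (L : ℝ) : Fin 4 → ℂ :=
  ![I * (Real.sqrt 10 : ℝ) / (6 * (L : ℂ) ^ 7), -(I * (Real.sqrt 10 : ℝ) / (6 * (L : ℂ) ^ 7)),
    I / (4 * (L : ℂ) ^ 7), -(I / (4 * (L : ℂ) ^ 7))]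

/-- Columns 1, 2 are symmetric and columns 3, 4 antisymmetric under the swap `1 ↔ 2`, `3 ↔ 4`;
in each pair the second column is the complex conjugate of the first. -/
noncomputable def A34eigenvectors (σ : ℝ) : Matrix (Fin 4) (Fin 4) ℂ :=
  let s : ℂ := Real.sqrt 3 * σ
  let t : ℂ := Real.sqrt 10
  !![31, 31, 13, 13;
     31, 31, -13, -13;
     9 * s - 4 * I * t, 9 * s + 4 * I * t, 3 * s + 8 * I, 3 * s - 8 * I;
     9 * s - 4 * I * t, 9 * s + 4 * I * t, -(3 * s + 8 * I), -(3 * s - 8 * I)]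

theorem det_A34eigenvectors (σ : ℝ) :
    (A34eigenvectors σ).det = -206336 * (Real.sqrt 10 : ℂ) := by
  rw [det_fin_four]
  simp only [A34eigenvectors, of_apply, cons_val', cons_val, cons_val_fin_one]
  linear_combination (206336 * ((Real.sqrt 10 : ℝ) : ℂ)) * I_sq

theorem isUnit_A34eigenvectors (σ : ℝ) : IsUnit (A34eigenvectors σ) := by
  rw [isUnit_iff_isUnit_det, det_A34eigenvectors, isUnit_iff_ne_zero]
  have h10 : Real.sqrt 10 ≠ 0 := by positivity
  exact mul_ne_zero (by norm_num) (by exact_mod_cast h10)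

theorem A34_map_mul_eigenvectors (L : ℝ) {σ : ℝ} (hσ : σ ^ 2 = 1) :
    (A34 L σ).map ofReal * A34eigenvectors σ
      = A34eigenvectors σ * diagonal (A34eigenvalues L) := by
  have h3 : ((Real.sqrt 3 : ℝ) : ℂ) ^ 2 = 3 := by norm_cast; simp
  have h10 : ((Real.sqrt 10 : ℝ) : ℂ) ^ 2 = 10 := by norm_cast; simp
  have hσ' : (σ : ℂ) ^ 2 = 1 := by exact_mod_cast hσ
  ext i j
  fin_cases i <;> fin_cases j <;>
    · simp only [A34, A34eigenvectors, A34eigenvalues, Fin.zero_eta, Fin.mk_one, Fin.reduceFinMk,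
        Fin.isValue, mul_apply, Fin.sum_univ_four, map_apply, of_apply, cons_val', cons_val,
        cons_val_fin_one, diagonal_apply_eq, diagonal_apply_ne, ne_eq, Fin.reduceEq,
        not_false_eq_true, mul_zero, add_zero, zero_add, ofReal_div, ofReal_mul, ofReal_ofNat,
        ofReal_pow, ofReal_neg]
      ring_nf <;> simp only [h3, h10, hσ', I_sq] <;> ring_nf

theorem A34_map_eq_conj_diagonal (L : ℝ) {σ : ℝ} (hσ : σ ^ 2 = 1) :
    ∃ P : (Matrix (Fin 4) (Fin 4) ℂ)ˣ, (A34 L σ).map ofReal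
      = (P : Matrix (Fin 4) (Fin 4) ℂ) * diagonal (A34eigenvalues L)
        * (P : Matrix (Fin 4) (Fin 4) ℂ)⁻¹ := by
  obtain ⟨P, hP⟩ := isUnit_A34eigenvectors σ
  refine ⟨P, ?_⟩
  rw [hP, ← A34_map_mul_eigenvectors L hσ, ← hP, mul_assoc, ← coe_units_inv, P.mul_inv, mul_one]

theorem A34_charpoly (L : ℝ) {σ : ℝ} (hσ : σ ^ 2 = 1) :
    (A34 L σ).charpoly = X ^ 4 + C (49 / (144 * L ^ 14)) * X ^ 2 + C (5 / (288 * L ^ 28)) := by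
  set μ : ℂ := I * (Real.sqrt 10 : ℝ) / (6 * (L : ℂ) ^ 7)
  set ν : ℂ := I / (4 * (L : ℂ) ^ 7)
  obtain ⟨P, hP⟩ := A34_map_eq_conj_diagonal L hσ
  have hsum : -(μ ^ 2 + ν ^ 2) = ((49 / (144 * L ^ 14) : ℝ) : ℂ) := by
    rw [sq_I_mul_sqrt_ten_div_six_mul, sq_I_div_four_mul]; push_cast; ring
  have hprod : μ ^ 2 * ν ^ 2 = ((5 / (288 * L ^ 28) : ℝ) : ℂ) := by
    rw [sq_I_mul_sqrt_ten_div_six_mul, sq_I_div_four_mul]; push_cast; ring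
  apply map_injective ofRealHom ofReal_injective
  calc (A34 L σ).charpoly.map ofRealHom = ((A34 L σ).map ofReal).charpoly :=
        (charpoly_map _ _).symm
    _ = (diagonal ![μ, -μ, ν, -ν]).charpoly := by rw [hP, charpoly_units_conj, A34eigenvalues]
    _ = X ^ 4 + C (-(μ ^ 2 + ν ^ 2)) * X ^ 2 + C (μ ^ 2 * ν ^ 2) := by
      rw [charpoly_diagonal_neg_pair, C_neg]; ring
    _ = _ := by
      rw [hsum, hprod]
      simp only [Polynomial.map_add, Polynomial.map_mul, Polynomial.map_pow, map_X, map_C,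
        ofRealHom_eq_coe]

theorem A34_det (L : ℝ) {σ : ℝ} (hσ : σ ^ 2 = 1) : (A34 L σ).det = 5 / (288 * L ^ 28) := by
  rw [det_eq_sign_charpoly_coeff, A34_charpoly L hσ]
  norm_num [coeff_add, coeff_C, coeff_X_pow]

/-- The linearization at the polar equilibria `E₃, E₄` has characteristic
polynomial `λ⁴ + 49λ²/(144L¹⁴) + 5/(288L²⁸)` and four distinct purely imaginary eigenvalues
`±i√10/(6L⁷)`, `±i/(4L⁷)`; in particular it is diagonalizable over `ℂ` and nonsingular. -/
theorem linearization_polar34_spectrum (L : ℝ) (hL : 0 < L) (σ : ℝ)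
    (hσ : σ = 1 ∨ σ = -1) :
    (A34 L σ).charpoly = X ^ 4 + C (49 / (144 * L ^ 14)) * X ^ 2 + C (5 / (288 * L ^ 28)) ∧
    spectrum ℂ ((A34 L σ).map Complex.ofReal)
      = {Complex.I * (Real.sqrt 10 : ℝ) / (6 * (L : ℂ) ^ 7),
         -(Complex.I * (Real.sqrt 10 : ℝ) / (6 * (L : ℂ) ^ 7)),
         Complex.I / (4 * (L : ℂ) ^ 7), -(Complex.I / (4 * (L : ℂ) ^ 7))} ∧
    ([Complex.I * (Real.sqrt 10 : ℝ) / (6 * (L : ℂ) ^ 7),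
      -(Complex.I * (Real.sqrt 10 : ℝ) / (6 * (L : ℂ) ^ 7)),
      Complex.I / (4 * (L : ℂ) ^ 7), -(Complex.I / (4 * (L : ℂ) ^ 7))] : List ℂ).Pairwise
        (· ≠ ·) ∧
    (∃ (P : Matrix (Fin 4) (Fin 4) ℂ) (d : Fin 4 → ℂ), IsUnit P ∧
      (A34 L σ).map Complex.ofReal = P * Matrix.diagonal d * P⁻¹) ∧
    (A34 L σ).det ≠ 0 := by
  have hσ2 : σ ^ 2 = 1 := by rcases hσ with rfl | rfl <;> norm_num
  have hL0 : (L : ℂ) ≠ 0 := ofReal_ne_zero.mpr hL.ne'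
  obtain ⟨P, hP⟩ := A34_map_eq_conj_diagonal L hσ2
  refine ⟨A34_charpoly L hσ2, ?_, List.pairwise_ne_neg_pair ?_ ?_ ?_, ⟨P, _, P.isUnit, hP⟩, ?_⟩
  · rw [hP, ← coe_units_inv, spectrum.units_conjugate, spectrum_diagonal, A34eigenvalues]
    simp only [Matrix.range_cons, Matrix.range_empty, Set.union_empty, Set.singleton_union]
  · exact ne_zero_pow two_ne_zero (by rw [sq_I_mul_sqrt_ten_div_six_mul]; simpa using hL0)
  · exact ne_zero_pow two_ne_zero (by rw [sq_I_div_four_mul]; simpa using hL0)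
  · rw [sq_I_mul_sqrt_ten_div_six_mul, sq_I_div_four_mul, Ne, neg_inj]
    field_simp
    norm_num
  · rw [A34_det L hσ2]
    positivity
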